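/- arXiv:2502.12831 — 3 statements merged into one kernel-verified Lean document; each statement's English description precedes it below -/
import Mathlib

section
/- The linearized recombinator in the linkage basis satisfies: for all I, J ⊆ [L] and all x in the probability simplex on {-1,+1}^L, ⟨w_I, ∇R(x) w_J⟩ = -1_{[I=J]} β_I + 1_{[J ⊊ I]} ∑_{∅⊊K⊊[L]} ν(K) 2^{1+L/2} ⟨w_{I∩K}, x⟩ 1_{[I∩Kᶜ = J]}. In particular ⟨w_I, ∇R(x) w_J⟩ = 0 whenever J ⊄ I, so ∇R(x) is lower-triangular with respect to the partial order of inclusion on subsets, with diagonal entries -β_I. -/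
open Finset

noncomputable def spin (b : Bool) : ℝ := if b then 1 else -1

/-- The `I`-linkage vector `w_I(γ) = 2^{-L/2} ∏_{ℓ ∈ I} γ^ℓ`. -/
noncomputable def wvec (L : ℕ) (I : Finset (Fin L)) : (Fin L → Bool) → ℝ :=
  fun γ => (2 : ℝ) ^ (-(L : ℝ) / 2) * ∏ ℓ ∈ I, spin (γ ℓ)

/-- The marginal `x^A` on `{-1,+1}^A`. -/
noncomputable def marg {L : ℕ} (A : Finset (Fin L)) (x : (Fin L → Bool) → ℝ) :
    (A → Bool) → ℝ :=
  fun γ => ∑ δ : Fin L → Bool, if (∀ ℓ : A, δ ℓ.1 = γ ℓ) then x δ else 0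

/-- The product vector over complementary index sets. -/
noncomputable def tensor {L : ℕ} (A : Finset (Fin L))
    (y : (A → Bool) → ℝ) (z : ((Aᶜ : Finset (Fin L)) → Bool) → ℝ) :
    (Fin L → Bool) → ℝ :=
  fun γ => y (fun ℓ => γ ℓ.1) * z (fun ℓ => γ ℓ.1)

/-- Proper nonempty subsets of `[L]`. -/
noncomputable def properSubsets (L : ℕ) : Finset (Finset (Fin L)) :=
  univ.filter (fun K => K ≠ ∅ ∧ K ≠ univ)

/-- `ν^A(B) = ∑_{K : K∩A = B} ν(K)`. -/
noncomputable def nuMarg {L : ℕ} (ν : Finset (Fin L) → ℝ)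
    (A B : Finset (Fin L)) : ℝ :=
  ∑ K : Finset (Fin L), if K ∩ A = B then ν K else 0

/-- `β_I = 1 - 2ν^I(I)`, with the convention `β_∅ := -β_{[L]}`. -/
noncomputable def beta {L : ℕ} (ν : Finset (Fin L) → ℝ) (I : Finset (Fin L)) : ℝ :=
  if I = ∅ then -(1 - 2 * nuMarg ν univ univ) else 1 - 2 * nuMarg ν I I

/-- The Jacobian of the recombinator:
`∇R(x)h = ∑_{∅⊊K⊊[L]} ν(K)(x^K ⊗ h^{Kᶜ} + h^K ⊗ x^{Kᶜ} - h)`. -/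
noncomputable def nablaR {L : ℕ} (ν : Finset (Fin L) → ℝ)
    (x h : (Fin L → Bool) → ℝ) : (Fin L → Bool) → ℝ :=
  fun γ => ∑ K ∈ properSubsets L,
    ν K * (tensor K (marg K x) (marg Kᶜ h) γ
      + tensor K (marg K h) (marg Kᶜ x) γ - h γ)


section Helpers

lemma spin_sq (b : Bool) : spin b * spin b = 1 := by cases b <;> simp [spin]

lemma sum_prod_spin {L : ℕ} (S : Finset (Fin L)) :
    ∑ γ : Fin L → Bool, ∏ ℓ ∈ S, spin (γ ℓ) = if S = ∅ then (2:ℝ)^L else 0 := by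
  classical
  have key : ∑ γ : Fin L → Bool, ∏ ℓ ∈ S, spin (γ ℓ)
      = ∏ ℓ : Fin L, (if ℓ ∈ S then (0:ℝ) else 2) := by
    have h1 : ∀ γ : Fin L → Bool, ∏ ℓ ∈ S, spin (γ ℓ)
        = ∏ ℓ : Fin L, (if ℓ ∈ S then spin (γ ℓ) else 1) := by
      intro γ
      rw [Finset.prod_ite_mem, Finset.univ_inter]
    simp only [h1]
    rw [← Fintype.piFinset_univ,
      ← Finset.prod_univ_sum (fun _ : Fin L => (Finset.univ : Finset Bool))
        (fun ℓ b => if ℓ ∈ S then spin b else 1)]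
    refine Finset.prod_congr rfl fun ℓ _ => ?_
    by_cases h : ℓ ∈ S <;> simp [h, spin]
  rw [key]
  by_cases h : S = ∅
  · simp [h]
  · simp only [h, if_false]
    obtain ⟨ℓ, hℓ⟩ := Finset.nonempty_iff_ne_empty.2 h
    exact Finset.prod_eq_zero (Finset.mem_univ ℓ) (by simp [hℓ])

lemma prod_spin_mul {L : ℕ} (I J : Finset (Fin L)) (γ : Fin L → Bool) :
    (∏ ℓ ∈ I, spin (γ ℓ)) * ∏ ℓ ∈ J, spin (γ ℓ) = ∏ ℓ ∈ (symmDiff I J), spin (γ ℓ) := by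
  classical
  have hI : ∏ ℓ ∈ I, spin (γ ℓ) = (∏ ℓ ∈ I \ J, spin (γ ℓ)) * ∏ ℓ ∈ I ∩ J, spin (γ ℓ) := by
    rw [← Finset.prod_union (Finset.disjoint_sdiff_inter I J), Finset.sdiff_union_inter]
  have hJ : ∏ ℓ ∈ J, spin (γ ℓ) = (∏ ℓ ∈ J \ I, spin (γ ℓ)) * ∏ ℓ ∈ I ∩ J, spin (γ ℓ) := by
    rw [Finset.inter_comm, ← Finset.prod_union (Finset.disjoint_sdiff_inter J I),
      Finset.sdiff_union_inter]
  have hsq : (∏ ℓ ∈ I ∩ J, spin (γ ℓ)) * ∏ ℓ ∈ I ∩ J, spin (γ ℓ) = 1 := by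
    rw [← Finset.prod_mul_distrib]
    exact Finset.prod_eq_one fun ℓ _ => spin_sq (γ ℓ)
  have hd : Disjoint (I \ J) (J \ I) := disjoint_sdiff_sdiff
  have hsd : symmDiff I J = (I \ J) ∪ (J \ I) := rfl
  rw [hI, hJ, hsd, Finset.prod_union hd]
  calc (∏ ℓ ∈ I \ J, spin (γ ℓ)) * (∏ ℓ ∈ I ∩ J, spin (γ ℓ)) *
      ((∏ ℓ ∈ J \ I, spin (γ ℓ)) * ∏ ℓ ∈ I ∩ J, spin (γ ℓ))
      = (∏ ℓ ∈ I \ J, spin (γ ℓ)) * (∏ ℓ ∈ J \ I, spin (γ ℓ)) *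
        ((∏ ℓ ∈ I ∩ J, spin (γ ℓ)) * ∏ ℓ ∈ I ∩ J, spin (γ ℓ)) := by ring
    _ = _ := by rw [hsq, mul_one]

lemma sum_mul_prod_spin {L : ℕ} (J A : Finset (Fin L)) :
    ∑ ε : Fin L → Bool, wvec L J ε * ∏ ℓ ∈ A, spin (ε ℓ) =
      if A = J then (2:ℝ)^((L:ℝ)/2) else 0 := by
  classical
  have h : ∀ ε : Fin L → Bool, wvec L J ε * ∏ ℓ ∈ A, spin (ε ℓ)
      = (2:ℝ) ^ (-(L:ℝ)/2) * ∏ ℓ ∈ symmDiff J A, spin (ε ℓ) := by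
    intro ε
    rw [wvec, mul_assoc, prod_spin_mul]
  simp only [h]
  rw [← Finset.mul_sum, sum_prod_spin]
  have hiff : symmDiff J A = ∅ ↔ A = J := by
    rw [← Finset.bot_eq_empty, symmDiff_eq_bot]
    exact ⟨fun h => h.symm, fun h => h.symm⟩
  by_cases hAJ : A = J
  · rw [if_pos (hiff.2 hAJ), if_pos hAJ]
    rw [← Real.rpow_natCast 2 L, ← Real.rpow_add (by norm_num),
      show (-(L:ℝ)/2 + (L:ℝ)) = (L:ℝ)/2 by ring]
  · rw [if_neg (fun h => hAJ (hiff.1 h)), if_neg hAJ, mul_zero]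

lemma w_orth {L : ℕ} (I J : Finset (Fin L)) :
    ∑ γ : Fin L → Bool, wvec L I γ * wvec L J γ = if I = J then 1 else 0 := by
  classical
  have h : ∀ γ : Fin L → Bool, wvec L I γ * wvec L J γ
      = (2:ℝ) ^ (-(L:ℝ)/2) * (wvec L J γ * ∏ ℓ ∈ I, spin (γ ℓ)) := by
    intro γ; rw [wvec]; ring
  simp only [h]
  rw [← Finset.mul_sum, sum_mul_prod_spin]
  by_cases hIJ : I = J
  · rw [if_pos hIJ, if_pos hIJ, ← Real.rpow_add (by norm_num),
      show (-(L:ℝ)/2 + (L:ℝ)/2) = 0 by ring, Real.rpow_zero]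
  · rw [if_neg hIJ, if_neg hIJ, mul_zero]

/-- merge of two configurations along `K` -/
noncomputable def mrg {L : ℕ} (K : Finset (Fin L)) (δ ε : Fin L → Bool) : Fin L → Bool :=
  fun ℓ => if ℓ ∈ K then δ ℓ else ε ℓ

lemma tensor_inner {L : ℕ} (K I : Finset (Fin L)) (x h : (Fin L → Bool) → ℝ) :
    ∑ γ : Fin L → Bool, wvec L I γ * tensor K (marg K x) (marg Kᶜ h) γ
    = (2:ℝ)^(-(L:ℝ)/2) * ((∑ δ : Fin L → Bool, x δ * ∏ ℓ ∈ I ∩ K, spin (δ ℓ))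
        * (∑ ε : Fin L → Bool, h ε * ∏ ℓ ∈ I ∩ Kᶜ, spin (ε ℓ))) := by
  classical
  have step1 : ∀ γ : Fin L → Bool,
      wvec L I γ * tensor K (marg K x) (marg Kᶜ h) γ
      = ∑ δ : Fin L → Bool, ∑ ε : Fin L → Bool,
          (if (∀ ℓ : K, δ ℓ.1 = γ ℓ.1) then x δ else 0)
          * (if (∀ ℓ : (Kᶜ : Finset (Fin L)), ε ℓ.1 = γ ℓ.1) then h ε else 0)
          * wvec L I γ := by
    intro γ
    rw [tensor, marg, marg, Finset.sum_mul_sum]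
    rw [Finset.mul_sum]
    refine Finset.sum_congr rfl fun δ _ => ?_
    rw [Finset.mul_sum]
    refine Finset.sum_congr rfl fun ε _ => ?_
    ring
  simp only [step1]
  rw [Finset.sum_comm]
  have step2 : ∀ δ : Fin L → Bool, ∑ γ : Fin L → Bool, ∑ ε : Fin L → Bool,
      (if (∀ ℓ : K, δ ℓ.1 = γ ℓ.1) then x δ else 0)
      * (if (∀ ℓ : (Kᶜ : Finset (Fin L)), ε ℓ.1 = γ ℓ.1) then h ε else 0)
      * wvec L I γ
      = ∑ ε : Fin L → Bool, x δ * h ε * wvec L I (mrg K δ ε) := by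
    intro δ
    rw [Finset.sum_comm]
    refine Finset.sum_congr rfl fun ε _ => ?_
    have key : ∀ γ : Fin L → Bool,
        (if (∀ ℓ : K, δ ℓ.1 = γ ℓ.1) then x δ else 0)
        * (if (∀ ℓ : (Kᶜ : Finset (Fin L)), ε ℓ.1 = γ ℓ.1) then h ε else 0)
        * wvec L I γ
        = if γ = mrg K δ ε then x δ * h ε * wvec L I γ else 0 := by
      intro γ
      by_cases hγ : γ = mrg K δ ε
      · subst hγ
        rw [if_pos, if_pos, if_pos rfl]
        · rintro ⟨ℓ, hℓ⟩
          have : ℓ ∉ K := Finset.mem_compl.1 hℓ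
          simp [mrg, this]
        · rintro ⟨ℓ, hℓ⟩
          simp [mrg, hℓ]
      · rw [if_neg hγ]
        by_cases h1 : (∀ ℓ : K, δ ℓ.1 = γ ℓ.1)
        · by_cases h2 : (∀ ℓ : (Kᶜ : Finset (Fin L)), ε ℓ.1 = γ ℓ.1)
          · exfalso
            apply hγ
            funext ℓ
            by_cases hℓ : ℓ ∈ K
            · rw [mrg]; simp only [hℓ, if_true]; exact (h1 ⟨ℓ, hℓ⟩).symm
            · rw [mrg]; simp only [hℓ, if_false]
              exact (h2 ⟨ℓ, Finset.mem_compl.2 hℓ⟩).symm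
          · rw [if_neg h2, mul_zero, zero_mul]
        · rw [if_neg h1, zero_mul, zero_mul]
    simp only [key]
    rw [Finset.sum_ite_eq' Finset.univ (mrg K δ ε)
      (fun γ => x δ * h ε * wvec L I γ)]
    simp
  simp only [step2]
  have step3 : ∀ (δ ε : Fin L → Bool), wvec L I (mrg K δ ε)
      = (2:ℝ)^(-(L:ℝ)/2) * ((∏ ℓ ∈ I ∩ K, spin (δ ℓ)) * ∏ ℓ ∈ I ∩ Kᶜ, spin (ε ℓ)) := by
    intro δ ε
    rw [wvec]
    congr 1
    have hsplit : I = (I ∩ K) ∪ (I ∩ Kᶜ) := by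
      rw [← Finset.inter_union_distrib_left, Finset.union_compl, Finset.inter_univ]
    have hd : Disjoint (I ∩ K) (I ∩ Kᶜ) :=
      Finset.disjoint_of_subset_left Finset.inter_subset_right
        (Finset.disjoint_of_subset_right Finset.inter_subset_right disjoint_compl_right)
    rw [show ∏ ℓ ∈ I, spin (mrg K δ ε ℓ) = ∏ ℓ ∈ (I ∩ K) ∪ (I ∩ Kᶜ), spin (mrg K δ ε ℓ)
        from by rw [← hsplit], Finset.prod_union hd]
    congr 1
    · refine Finset.prod_congr rfl fun ℓ hℓ => ?_
      have : ℓ ∈ K := (Finset.mem_inter.1 hℓ).2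
      simp [mrg, this]
    · refine Finset.prod_congr rfl fun ℓ hℓ => ?_
      have : ℓ ∉ K := Finset.mem_compl.1 (Finset.mem_inter.1 hℓ).2
      simp [mrg, this]
  calc ∑ δ : Fin L → Bool, ∑ ε : Fin L → Bool, x δ * h ε * wvec L I (mrg K δ ε)
      = ∑ δ : Fin L → Bool, ∑ ε : Fin L → Bool, (2:ℝ)^(-(L:ℝ)/2) *
          ((x δ * ∏ ℓ ∈ I ∩ K, spin (δ ℓ)) * (h ε * ∏ ℓ ∈ I ∩ Kᶜ, spin (ε ℓ))) := by
        refine Finset.sum_congr rfl fun δ _ => Finset.sum_congr rfl fun ε _ => ?_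
        rw [step3]; ring
    _ = _ := by
        rw [Finset.sum_mul_sum, Finset.mul_sum]
        refine Finset.sum_congr rfl fun δ _ => ?_
        rw [Finset.mul_sum]

lemma rpow_cancel {L : ℕ} : (2:ℝ)^(-(L:ℝ)/2) * (2:ℝ)^((L:ℝ)/2) = 1 := by
  rw [← Real.rpow_add (by norm_num), show (-(L:ℝ)/2 + (L:ℝ)/2) = 0 by ring, Real.rpow_zero]

lemma T1eval {L : ℕ} (K I J : Finset (Fin L)) (x : (Fin L → Bool) → ℝ) :
    ∑ γ : Fin L → Bool, wvec L I γ * tensor K (marg K x) (marg Kᶜ (wvec L J)) γ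
    = (if I ∩ Kᶜ = J then 1 else 0)
      * ∑ δ : Fin L → Bool, x δ * ∏ ℓ ∈ I ∩ K, spin (δ ℓ) := by
  rw [tensor_inner, sum_mul_prod_spin]
  by_cases h : I ∩ Kᶜ = J
  · rw [if_pos h, if_pos h, one_mul]
    set X := ∑ δ : Fin L → Bool, x δ * ∏ ℓ ∈ I ∩ K, spin (δ ℓ)
    calc (2:ℝ)^(-(L:ℝ)/2) * (X * (2:ℝ)^((L:ℝ)/2))
        = ((2:ℝ)^(-(L:ℝ)/2) * (2:ℝ)^((L:ℝ)/2)) * X := by ring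
      _ = X := by rw [rpow_cancel, one_mul]
  · rw [if_neg h, if_neg h, mul_zero, mul_zero, zero_mul]

lemma T2eval {L : ℕ} (K I J : Finset (Fin L)) (x : (Fin L → Bool) → ℝ) :
    ∑ γ : Fin L → Bool, wvec L I γ * tensor K (marg K (wvec L J)) (marg Kᶜ x) γ
    = (if I ∩ K = J then 1 else 0)
      * ∑ ε : Fin L → Bool, x ε * ∏ ℓ ∈ I ∩ Kᶜ, spin (ε ℓ) := by
  rw [tensor_inner, sum_mul_prod_spin]
  by_cases h : I ∩ K = J
  · rw [if_pos h, if_pos h, one_mul]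
    set X := ∑ ε : Fin L → Bool, x ε * ∏ ℓ ∈ I ∩ Kᶜ, spin (ε ℓ)
    calc (2:ℝ)^(-(L:ℝ)/2) * ((2:ℝ)^((L:ℝ)/2) * X)
        = ((2:ℝ)^(-(L:ℝ)/2) * (2:ℝ)^((L:ℝ)/2)) * X := by ring
      _ = X := by rw [rpow_cancel, one_mul]
  · rw [if_neg h, if_neg h, zero_mul, mul_zero]

lemma inner_w {L : ℕ} (A : Finset (Fin L)) (x : (Fin L → Bool) → ℝ) :
    ∑ γ : Fin L → Bool, wvec L A γ * x γ
      = (2:ℝ)^(-(L:ℝ)/2) * ∑ δ : Fin L → Bool, x δ * ∏ ℓ ∈ A, spin (δ ℓ) := by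
  rw [Finset.mul_sum]
  refine Finset.sum_congr rfl fun γ _ => ?_
  rw [wvec]; ring

lemma compl_mem_PS {L : ℕ} {K : Finset (Fin L)} (hK : K ∈ properSubsets L) :
    Kᶜ ∈ properSubsets L := by
  simp only [properSubsets, Finset.mem_filter, Finset.mem_univ, true_and] at *
  constructor
  · intro h
    exact hK.2 (by simpa using congrArg compl h)
  · intro h
    exact hK.1 (by simpa using congrArg compl h)

lemma master {L : ℕ} (ν : Finset (Fin L) → ℝ)
    (hsum : ∑ K ∈ properSubsets L, ν K = 1)
    (hsymm : ∀ K, ν K = ν Kᶜ)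
    (x : (Fin L → Bool) → ℝ) (I J : Finset (Fin L)) :
    ∑ γ : Fin L → Bool, wvec L I γ * nablaR ν x (wvec L J) γ
    = (∑ K ∈ properSubsets L, ν K * (2 * (if I ∩ Kᶜ = J then 1 else 0)
        * ∑ δ : Fin L → Bool, x δ * ∏ ℓ ∈ I ∩ K, spin (δ ℓ)))
      - (if I = J then 1 else 0) := by
  classical
  have swap : ∑ γ : Fin L → Bool, wvec L I γ * nablaR ν x (wvec L J) γ
      = ∑ K ∈ properSubsets L, ∑ γ : Fin L → Bool, wvec L I γ *
          (ν K * (tensor K (marg K x) (marg Kᶜ (wvec L J)) γ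
            + tensor K (marg K (wvec L J)) (marg Kᶜ x) γ - wvec L J γ)) := by
    rw [Finset.sum_comm]
    refine Finset.sum_congr rfl fun γ _ => ?_
    rw [nablaR, Finset.mul_sum]
  rw [swap]
  have perK : ∀ K ∈ properSubsets L, ∑ γ : Fin L → Bool, wvec L I γ *
      (ν K * (tensor K (marg K x) (marg Kᶜ (wvec L J)) γ
        + tensor K (marg K (wvec L J)) (marg Kᶜ x) γ - wvec L J γ))
      = ν K * (((if I ∩ Kᶜ = J then 1 else 0)
            * ∑ δ : Fin L → Bool, x δ * ∏ ℓ ∈ I ∩ K, spin (δ ℓ))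
          + ((if I ∩ K = J then 1 else 0)
            * ∑ ε : Fin L → Bool, x ε * ∏ ℓ ∈ I ∩ Kᶜ, spin (ε ℓ))
          - (if I = J then 1 else 0)) := by
    intro K _
    have expand : ∀ γ : Fin L → Bool, wvec L I γ *
        (ν K * (tensor K (marg K x) (marg Kᶜ (wvec L J)) γ
          + tensor K (marg K (wvec L J)) (marg Kᶜ x) γ - wvec L J γ))
        = ν K * (wvec L I γ * tensor K (marg K x) (marg Kᶜ (wvec L J)) γ)
          + ν K * (wvec L I γ * tensor K (marg K (wvec L J)) (marg Kᶜ x) γ)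
          - ν K * (wvec L I γ * wvec L J γ) := by
      intro γ; ring
    simp only [expand]
    rw [Finset.sum_sub_distrib, Finset.sum_add_distrib,
      ← Finset.mul_sum, ← Finset.mul_sum, ← Finset.mul_sum,
      T1eval, T2eval, w_orth]
    ring
  rw [Finset.sum_congr rfl perK]
  have split : ∑ K ∈ properSubsets L, ν K * (((if I ∩ Kᶜ = J then 1 else 0)
            * ∑ δ : Fin L → Bool, x δ * ∏ ℓ ∈ I ∩ K, spin (δ ℓ))
          + ((if I ∩ K = J then 1 else 0)
            * ∑ ε : Fin L → Bool, x ε * ∏ ℓ ∈ I ∩ Kᶜ, spin (ε ℓ))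
          - (if I = J then 1 else 0))
      = (∑ K ∈ properSubsets L, ν K * ((if I ∩ Kᶜ = J then 1 else 0)
            * ∑ δ : Fin L → Bool, x δ * ∏ ℓ ∈ I ∩ K, spin (δ ℓ)))
        + (∑ K ∈ properSubsets L, ν K * ((if I ∩ K = J then 1 else 0)
            * ∑ ε : Fin L → Bool, x ε * ∏ ℓ ∈ I ∩ Kᶜ, spin (ε ℓ)))
        - (∑ K ∈ properSubsets L, ν K * (if I = J then 1 else 0)) := by
    rw [← Finset.sum_add_distrib, ← Finset.sum_sub_distrib]
    refine Finset.sum_congr rfl fun K _ => by ring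
  rw [split]
  have sym : (∑ K ∈ properSubsets L, ν K * ((if I ∩ K = J then 1 else 0)
        * ∑ ε : Fin L → Bool, x ε * ∏ ℓ ∈ I ∩ Kᶜ, spin (ε ℓ)))
      = ∑ K ∈ properSubsets L, ν K * ((if I ∩ Kᶜ = J then 1 else 0)
        * ∑ δ : Fin L → Bool, x δ * ∏ ℓ ∈ I ∩ K, spin (δ ℓ)) := by
    refine Finset.sum_nbij' (fun K => Kᶜ) (fun K => Kᶜ) ?_ ?_ ?_ ?_ ?_
    · intro K hK; exact compl_mem_PS hK
    · intro K hK; exact compl_mem_PS hK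
    · intro K _; exact compl_compl K
    · intro K _; exact compl_compl K
    · intro K _
      rw [← hsymm K, compl_compl]
  rw [sym]
  have last : (∑ K ∈ properSubsets L, ν K * (if I = J then 1 else 0))
      = (if I = J then 1 else 0) := by
    rw [← Finset.sum_mul, hsum, one_mul]
  rw [last]
  congr 1
  rw [← Finset.sum_add_distrib]
  refine Finset.sum_congr rfl fun K _ => by ring

end Helpers


lemma nuMarg_univ {L : ℕ} (ν : Finset (Fin L) → ℝ) :
    nuMarg ν univ univ = ν univ := by
  rw [nuMarg]
  simp only [Finset.inter_univ]
  rw [Finset.sum_ite_eq' Finset.univ (univ : Finset (Fin L)) ν]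
  simp

lemma main_eq {L : ℕ} (ν : Finset (Fin L) → ℝ)
    (hsum : ∑ K ∈ properSubsets L, ν K = 1)
    (hsupp : ν ∅ = 0 ∧ ν (univ : Finset (Fin L)) = 0)
    (hsymm : ∀ K, ν K = ν Kᶜ)
    (x : (Fin L → Bool) → ℝ) (hx1 : ∑ γ : Fin L → Bool, x γ = 1)
    (I J : Finset (Fin L)) :
    ∑ γ : Fin L → Bool, wvec L I γ * nablaR ν x (wvec L J) γ
      = (if I = J then -(beta ν I) else 0)
        + (if J ⊂ I then
            ∑ K ∈ properSubsets L,
              ν K * (2 : ℝ) ^ (1 + (L : ℝ) / 2)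
                * (∑ γ : Fin L → Bool, wvec L (I ∩ K) γ * x γ)
                * (if I ∩ Kᶜ = J then 1 else 0)
          else 0) := by
  classical
  rw [master ν hsum hsymm x I J]
  by_cases hIJ : I = J
  · subst hIJ
    rw [if_pos rfl, if_neg (fun h => (Finset.ssubset_iff_subset_ne.1 h).2 rfl), add_zero,
      if_pos rfl]
    have point : ∀ K ∈ properSubsets L, ν K * (2 * (if I ∩ Kᶜ = I then 1 else 0)
        * ∑ δ : Fin L → Bool, x δ * ∏ ℓ ∈ I ∩ K, spin (δ ℓ))
        = 2 * (if I ∩ Kᶜ = I then ν K else 0) := by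
      intro K _
      by_cases h : I ∩ Kᶜ = I
      · have hIK : I ∩ K = ∅ := by
          rw [← h, Finset.inter_assoc,
            show Kᶜ ∩ K = (⊥ : Finset (Fin L)) from compl_inf_eq_bot]
          simp
        rw [if_pos h, if_pos h, hIK]
        simp only [Finset.prod_empty, mul_one, hx1]
        ring
      · rw [if_neg h, if_neg h]
        ring
    rw [Finset.sum_congr rfl point, ← Finset.mul_sum]
    by_cases hI : I = ∅
    · subst hI
      have hcond : ∀ K : Finset (Fin L), ((∅ : Finset (Fin L)) ∩ Kᶜ = ∅) := fun K =>
        Finset.empty_inter _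
      simp only [hcond, if_true, hsum]
      rw [beta, if_pos rfl, nuMarg_univ, hsupp.2]
      norm_num
    · rw [beta, if_neg hI]
      have hS : (∑ K ∈ properSubsets L, if I ∩ Kᶜ = I then ν K else 0)
          = nuMarg ν I I := by
        have stepa : nuMarg ν I I
            = ∑ K ∈ properSubsets L, (if K ∩ I = I then ν K else 0) := by
          rw [nuMarg]
          refine (Finset.sum_subset (Finset.subset_univ _) ?_).symm
          intro K _ hK
          simp only [properSubsets, Finset.mem_filter, Finset.mem_univ, true_and,
            not_and_or, not_not] at hK
          rcases hK with hK | hK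
          · rw [hK]
            simp [hsupp.1]
          · rw [hK]
            simp [hsupp.2]
        rw [stepa]
        refine Finset.sum_nbij' (fun K => Kᶜ) (fun K => Kᶜ) ?_ ?_ ?_ ?_ ?_
        · intro K hK; exact compl_mem_PS hK
        · intro K hK; exact compl_mem_PS hK
        · intro K _; exact compl_compl K
        · intro K _; exact compl_compl K
        · intro K _
          show (if I ∩ Kᶜ = I then ν K else 0) = if Kᶜ ∩ I = I then ν Kᶜ else 0
          rw [Finset.inter_comm I Kᶜ, hsymm K]
      rw [hS]
      ring
  · rw [if_neg hIJ, if_neg hIJ, zero_add, sub_zero]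
    by_cases hsub : J ⊂ I
    · rw [if_pos hsub]
      have hp : (2:ℝ)^(1+(L:ℝ)/2) * (2:ℝ)^(-(L:ℝ)/2) = 2 := by
        rw [← Real.rpow_add (by norm_num), show (1+(L:ℝ)/2 + (-(L:ℝ)/2)) = (1:ℝ) by ring,
          Real.rpow_one]
      refine Finset.sum_congr rfl fun K _ => ?_
      rw [inner_w]
      linear_combination (-(ν K * (if I ∩ Kᶜ = J then 1 else 0)
        * ∑ δ : Fin L → Bool, x δ * ∏ ℓ ∈ I ∩ K, spin (δ ℓ))) * hp
    · rw [if_neg hsub]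
      refine Finset.sum_eq_zero fun K _ => ?_
      have h : ¬ (I ∩ Kᶜ = J) := by
        intro h
        refine hsub (Finset.ssubset_iff_subset_ne.2 ⟨?_, fun e => hIJ e.symm⟩)
        rw [← h]; exact Finset.inter_subset_left
      rw [if_neg h]
      ring

/-- The linearized recombinator in the linkage basis: for `x` in the probability
simplex on `{-1,+1}^L`,
`⟨w_I, ∇R(x)w_J⟩ = -1_{I=J} β_I + 1_{J⊊I} ∑_K ν(K) 2^{1+L/2} ⟨w_{I∩K}, x⟩ 1_{I∩Kᶜ=J}`;
in particular it vanishes whenever `J ⊄ I`, so `∇R(x)` is lower triangular for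
inclusion, with diagonal entries `-β_I`. -/

theorem linearized_recombinator_linkage_basis {L : ℕ}
    (ν : Finset (Fin L) → ℝ)
    (hnonneg : ∀ K, 0 ≤ ν K)
    (hsum : ∑ K ∈ properSubsets L, ν K = 1)
    (hsupp : ν ∅ = 0 ∧ ν (univ : Finset (Fin L)) = 0)
    (hsymm : ∀ K, ν K = ν Kᶜ)
    (x : (Fin L → Bool) → ℝ)
    (hx0 : ∀ γ, 0 ≤ x γ) (hx1 : ∑ γ : Fin L → Bool, x γ = 1)
    (I J : Finset (Fin L)) :
    (∑ γ : Fin L → Bool, wvec L I γ * nablaR ν x (wvec L J) γ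
      = (if I = J then -(beta ν I) else 0)
        + (if J ⊂ I then
            ∑ K ∈ properSubsets L,
              ν K * (2 : ℝ) ^ (1 + (L : ℝ) / 2)
                * (∑ γ : Fin L → Bool, wvec L (I ∩ K) γ * x γ)
                * (if I ∩ Kᶜ = J then 1 else 0)
          else 0)) ∧
    (¬ J ⊆ I → ∑ γ : Fin L → Bool, wvec L I γ * nablaR ν x (wvec L J) γ = 0) ∧
    (∑ γ : Fin L → Bool, wvec L I γ * nablaR ν x (wvec L I) γ = -(beta ν I)) := by
  refine ⟨main_eq ν hsum hsupp hsymm x hx1 I J, fun hns => ?_, ?_⟩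
  · rw [main_eq ν hsum hsupp hsymm x hx1 I J,
      if_neg (fun e => hns (le_of_eq e.symm)),
      if_neg (fun hs => hns hs.subset), add_zero]
  · rw [main_eq ν hsum hsupp hsymm x hx1 I I, if_pos rfl,
      if_neg (fun h => (Finset.ssubset_iff_subset_ne.1 h).2 rfl), add_zero]
end

section
/- For any probability vector x on {-1,+1}^L, ∇R(x)(x - π(x)) - R(x) = ∑_{∅⊊I⊊[L]} ν(I) (x-π(x))^I ⊗ (x-π(x))^{Iᶜ}. Consequently, if the hypercube has at most 3 coordinates (|A| ≤ 3), then R(x) = ∇R(x)(x - π(x)) exactly. -/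
open Finset

/-- One-locus marginal `x^{{ℓ}}(b)`. -/
noncomputable def oneMarg {L : ℕ} (x : (Fin L → Bool) → ℝ) (ℓ : Fin L) (b : Bool) : ℝ :=
  ∑ γ : Fin L → Bool, if γ ℓ = b then x γ else 0

/-- The linkage-equilibrium (product of marginals) projection `π(x)`. -/
noncomputable def piProj {L : ℕ} (x : (Fin L → Bool) → ℝ) : (Fin L → Bool) → ℝ :=
  fun γ => ∏ ℓ : Fin L, oneMarg x ℓ (γ ℓ)

/-- The recombinator `R(x) = ∑_{∅⊊I⊊[L]} ν(I)(x^I ⊗ x^{Iᶜ} - x)`. -/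
noncomputable def recomb {L : ℕ} (ν : Finset (Fin L) → ℝ)
    (x : (Fin L → Bool) → ℝ) : (Fin L → Bool) → ℝ :=
  fun γ => ∑ K ∈ properSubsets L,
    ν K * (tensor K (marg K x) (marg Kᶜ x) γ - x γ)

section Aux
variable {L : ℕ}


lemma sum_oneMarg (x : (Fin L → Bool) → ℝ) (hx1 : ∑ γ : Fin L → Bool, x γ = 1)
    (ℓ : Fin L) : ∑ b : Bool, oneMarg x ℓ b = 1 := by
  unfold oneMarg
  rw [Finset.sum_comm]
  calc ∑ γ : Fin L → Bool, ∑ b : Bool, (if γ ℓ = b then x γ else 0)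
      = ∑ γ : Fin L → Bool, x γ := by
        refine Finset.sum_congr rfl fun γ _ => ?_
        simp [Finset.sum_ite_eq]
    _ = 1 := hx1

lemma marg_sub (K : Finset (Fin L)) (x y : (Fin L → Bool) → ℝ) (γ : K → Bool) :
    marg K (fun δ => x δ - y δ) γ = marg K x γ - marg K y γ := by
  unfold marg
  rw [← Finset.sum_sub_distrib]
  refine Finset.sum_congr rfl fun δ _ => ?_
  split <;> simp

lemma marg_piProj (x : (Fin L → Bool) → ℝ) (hx1 : ∑ γ : Fin L → Bool, x γ = 1)
    (K : Finset (Fin L)) (γ : K → Bool) :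
    marg K (piProj x) γ = ∏ ℓ : K, oneMarg x ℓ.1 (γ ℓ) := by
  classical
  set t : Fin L → Finset Bool := fun ℓ => if h : ℓ ∈ K then {γ ⟨ℓ, h⟩} else univ with ht
  have hprod : ∏ ℓ, ∑ b ∈ t ℓ, oneMarg x ℓ b
      = ∑ δ ∈ Fintype.piFinset t, ∏ ℓ, oneMarg x ℓ (δ ℓ) :=
    Finset.prod_univ_sum t _
  have hL : ∏ ℓ, ∑ b ∈ t ℓ, oneMarg x ℓ b = ∏ ℓ : K, oneMarg x ℓ.1 (γ ℓ) := by
    rw [← Finset.prod_mul_prod_compl K (fun ℓ => ∑ b ∈ t ℓ, oneMarg x ℓ b)]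
    have h2 : ∏ ℓ ∈ Kᶜ, ∑ b ∈ t ℓ, oneMarg x ℓ b = 1 := by
      refine Finset.prod_eq_one fun ℓ hℓ => ?_
      have : ℓ ∉ K := Finset.mem_compl.mp hℓ
      rw [ht]; simp only [dif_neg this]
      exact sum_oneMarg x hx1 ℓ
    rw [h2, mul_one]
    rw [← Finset.prod_attach K (fun ℓ => ∑ b ∈ t ℓ, oneMarg x ℓ b)]
    rw [Finset.univ_eq_attach]
    refine Finset.prod_congr rfl fun ℓ _ => ?_
    rw [ht]; simp only [dif_pos ℓ.2]
    simp
  have hR : ∑ δ ∈ Fintype.piFinset t, ∏ ℓ, oneMarg x ℓ (δ ℓ) = marg K (piProj x) γ := by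
    unfold marg piProj
    rw [← Finset.sum_filter]
    refine Finset.sum_congr ?_ fun δ _ => rfl
    ext δ
    simp only [Fintype.mem_piFinset, Finset.mem_filter, Finset.mem_univ, true_and]
    constructor
    · intro h ℓ
      have := h ℓ.1
      rw [ht] at this
      simp only [dif_pos ℓ.2, Finset.mem_singleton] at this
      simpa using this
    · intro h ℓ
      rw [ht]
      by_cases hℓ : ℓ ∈ K
      · simp only [dif_pos hℓ, Finset.mem_singleton]
        exact h ⟨ℓ, hℓ⟩
      · simp [dif_neg hℓ]
  rw [← hR, ← hL, hprod]

lemma tensor_piProj (x : (Fin L → Bool) → ℝ) (hx1 : ∑ γ : Fin L → Bool, x γ = 1)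
    (K : Finset (Fin L)) (γ : Fin L → Bool) :
    tensor K (marg K (piProj x)) (marg Kᶜ (piProj x)) γ = piProj x γ := by
  unfold tensor
  rw [marg_piProj x hx1 K, marg_piProj x hx1 Kᶜ]
  unfold piProj
  rw [Finset.univ_eq_attach, Finset.univ_eq_attach,
    Finset.prod_attach K (fun ℓ => oneMarg x ℓ (γ ℓ)),
    Finset.prod_attach Kᶜ (fun ℓ => oneMarg x ℓ (γ ℓ)),
    Finset.prod_mul_prod_compl K (fun ℓ => oneMarg x ℓ (γ ℓ))]

lemma marg_singleton (x : (Fin L → Bool) → ℝ) (ℓ₀ : Fin L)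
    (γ : ({ℓ₀} : Finset (Fin L)) → Bool) :
    marg {ℓ₀} x γ = oneMarg x ℓ₀ (γ ⟨ℓ₀, Finset.mem_singleton_self ℓ₀⟩) := by
  unfold marg oneMarg
  refine Finset.sum_congr rfl fun δ _ => ?_
  congr 1
  simp only [eq_iff_iff]
  constructor
  · intro h; exact h ⟨ℓ₀, Finset.mem_singleton_self ℓ₀⟩
  · intro h ℓ
    have hℓ : ℓ.1 = ℓ₀ := Finset.mem_singleton.mp ℓ.2
    have : ℓ = ⟨ℓ₀, Finset.mem_singleton_self ℓ₀⟩ := Subtype.ext hℓ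
    rw [this]; exact h

lemma marg_singleton_sub_zero (x : (Fin L → Bool) → ℝ)
    (hx1 : ∑ γ : Fin L → Bool, x γ = 1) (ℓ₀ : Fin L)
    (γ : ({ℓ₀} : Finset (Fin L)) → Bool) :
    marg {ℓ₀} (fun δ => x δ - piProj x δ) γ = 0 := by
  rw [marg_sub, marg_singleton, marg_piProj x hx1]
  have hatt : ({ℓ₀} : Finset (Fin L)).attach = {⟨ℓ₀, Finset.mem_singleton_self ℓ₀⟩} := by
    ext a; simp [Subtype.ext_iff, Finset.mem_singleton.mp a.2]
  rw [Finset.univ_eq_attach, hatt, Finset.prod_singleton]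
  ring
lemma marg_card_one_sub_zero (x : (Fin L → Bool) → ℝ)
    (hx1 : ∑ γ : Fin L → Bool, x γ = 1) (s : Finset (Fin L)) (hs : s.card = 1)
    (γ : s → Bool) :
    marg s (fun δ => x δ - piProj x δ) γ = 0 := by
  obtain ⟨ℓ₀, rfl⟩ := Finset.card_eq_one.mp hs
  exact marg_singleton_sub_zero x hx1 ℓ₀ γ

end Aux

/-- `∇R(x)(x-π(x)) - R(x) = ∑_{∅⊊I⊊[L]} ν(I) (x-π(x))^I ⊗ (x-π(x))^{Iᶜ}` for any
probability vector `x`; consequently, when the hypercube has at most 3 coordinates,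
`R(x) = ∇R(x)(x-π(x))` exactly, since each summand involves a tensor factor
`(x-π(x))^I` with `#I ∈ {1,2}` containing a sub-marginal of size `≤ 1` on which
`x` and `π(x)` agree, forcing it to vanish. -/
theorem nablaR_recomb_identity {L : ℕ} (ν : Finset (Fin L) → ℝ)
    (hnonneg : ∀ K, 0 ≤ ν K)
    (hsum : ∑ K ∈ properSubsets L, ν K = 1)
    (hsymm : ∀ K, ν K = ν Kᶜ)
    (x : (Fin L → Bool) → ℝ)
    (hx0 : ∀ γ, 0 ≤ x γ) (hx1 : ∑ γ : Fin L → Bool, x γ = 1) :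
    (∀ γ, nablaR ν x (fun δ => x δ - piProj x δ) γ - recomb ν x γ
        = ∑ K ∈ properSubsets L,
            ν K * tensor K (marg K (fun δ => x δ - piProj x δ))
              (marg Kᶜ (fun δ => x δ - piProj x δ)) γ) ∧
    (L ≤ 3 → ∀ γ, recomb ν x γ = nablaR ν x (fun δ => x δ - piProj x δ) γ) := by
  have part1 : ∀ γ, nablaR ν x (fun δ => x δ - piProj x δ) γ - recomb ν x γ
        = ∑ K ∈ properSubsets L,
            ν K * tensor K (marg K (fun δ => x δ - piProj x δ))
              (marg Kᶜ (fun δ => x δ - piProj x δ)) γ := by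
    intro γ
    unfold nablaR recomb
    rw [← Finset.sum_sub_distrib]
    refine Finset.sum_congr rfl fun K _ => ?_
    have key := tensor_piProj x hx1 K γ
    simp only [tensor] at key ⊢
    simp only [marg_sub]
    rw [← key]
    ring
  refine ⟨part1, fun hL γ => ?_⟩
  have hz : ∑ K ∈ properSubsets L,
      ν K * tensor K (marg K (fun δ => x δ - piProj x δ))
        (marg Kᶜ (fun δ => x δ - piProj x δ)) γ = 0 := by
    refine Finset.sum_eq_zero fun K hK => ?_
    simp only [properSubsets, Finset.mem_filter, Finset.mem_univ, true_and] at hK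
    have hK1 : 1 ≤ K.card := Finset.card_pos.mpr (Finset.nonempty_of_ne_empty hK.1)
    have hKc : Kᶜ ≠ ∅ := by
      intro h
      exact hK.2 (by simpa [Finset.compl_eq_empty_iff] using h)
    have hK2 : 1 ≤ Kᶜ.card := Finset.card_pos.mpr (Finset.nonempty_of_ne_empty hKc)
    have hcard : K.card + Kᶜ.card = L := by
      simpa using Finset.card_add_card_compl K
    have hone : K.card = 1 ∨ Kᶜ.card = 1 := by omega
    simp only [tensor]
    rcases hone with h1 | h1
    · rw [marg_card_one_sub_zero x hx1 K h1]; ring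
    · rw [marg_card_one_sub_zero x hx1 Kᶜ h1]; ring
  have := part1 γ
  rw [hz] at this
  linarith
end

section
/- Summation estimate for harmonic recombination rates: there is a constant C independent of L, ε, and ℓ₀ such that ∑_{A ⊆ [L]∖{ℓ₀}, 1≤|A|≤2} L^{-|A|} (1/(ρ r_{{ℓ₀}∪A} ε) + L/(ρ r_{{ℓ₀}∪A}) + √(ln ρ / (ρ r_{{ℓ₀}∪A}))) ≤ C((1/(ρε) + L/ρ)(1/r*_{ℓ₀} + 1/r**) + √(ln ρ/(ρ r*_{ℓ₀})) + √(ln ρ/(ρ r**))), assuming ρ ≥ e. -/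
open Finset

/-- Reciprocal harmonic recombination rate at `ℓ₀`:
`1/r*_{ℓ₀} = (1/(L-1)) ∑_{ℓ₁ ≠ ℓ₀} 1/r_{{ℓ₀,ℓ₁}}`. -/
noncomputable def rstarInv {L : ℕ} (r : Fin L → Fin L → ℝ) (ℓ₀ : Fin L) : ℝ :=
  (1 / ((L : ℝ) - 1)) * ∑ ℓ₁ ∈ univ.erase ℓ₀, (r ℓ₀ ℓ₁)⁻¹

/-- Reciprocal average harmonic recombination rate:
`1/r** = (1/L) ∑_{ℓ₀} 1/r*_{ℓ₀}`. -/
noncomputable def rssInv {L : ℕ} (r : Fin L → Fin L → ℝ) : ℝ :=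
  (1 / (L : ℝ)) * ∑ ℓ₀ : Fin L, rstarInv r ℓ₀

/-!
Every summand is `L^{-|A|} φ(1/r_{{ℓ₀} ∪ A})` for `φ t = a t + √(b t)` with `a = 1/(ρε) + L/ρ` and
`b = ln ρ / ρ`; this `φ` is monotone, subadditive and concave on `[0, ∞)`. For `A = {ℓ}` the rate
is `r_{{ℓ₀,ℓ}}`; for `A = {ℓ₁, ℓ₂}` the triangle bound on `1/r_{{ℓ₀,ℓ₁,ℓ₂}}` and subadditivity split
the term into the three pair terms. The inverse pair rates through `ℓ₀` average exactly to
`1/r*_{ℓ₀}`, and all inverse pair rates average exactly to `1/r**`, so Jensen's inequality for `φ`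
bounds the whole sum by `3 (φ(1/r*_{ℓ₀}) + φ(1/r**))`.
-/

noncomputable def linSqrt (a b t : ℝ) : ℝ := a * t + √(b * t)

section linSqrt
variable {a b : ℝ}

lemma linSqrt_nonneg (ha : 0 ≤ a) {t : ℝ} (ht : 0 ≤ t) : 0 ≤ linSqrt a b t := by
  unfold linSqrt; positivity

lemma linSqrt_mono (ha : 0 ≤ a) (hb : 0 ≤ b) : Monotone (linSqrt a b) := fun _ _ hst =>
  add_le_add (mul_le_mul_of_nonneg_left hst ha)
    (Real.sqrt_le_sqrt (mul_le_mul_of_nonneg_left hst hb))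

lemma linSqrt_add_le (hb : 0 ≤ b) {s t : ℝ} (hs : 0 ≤ s) (ht : 0 ≤ t) :
    linSqrt a b (s + t) ≤ linSqrt a b s + linSqrt a b t := by
  have hsqrt : √(b * (s + t)) ≤ √(b * s) + √(b * t) := by
    rw [Real.sqrt_le_left (by positivity), add_sq, Real.sq_sqrt (by positivity),
      Real.sq_sqrt (by positivity)]
    nlinarith [mul_nonneg (Real.sqrt_nonneg (b * s)) (Real.sqrt_nonneg (b * t))]
  unfold linSqrt
  linarith [mul_add a s t]

lemma concaveOn_linSqrt (hb : 0 ≤ b) : ConcaveOn ℝ (Set.Ici 0) (linSqrt a b) := by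
  have h : linSqrt a b = fun t => a * t + √b • √t :=
    funext fun t => by rw [linSqrt, Real.sqrt_mul hb, smul_eq_mul]
  rw [h]
  exact ((LinearMap.mul ℝ ℝ a).concaveOn (convex_Ici 0)).add
    (Real.strictConcaveOn_sqrt.concaveOn.smul (Real.sqrt_nonneg b))

end linSqrt

lemma ConcaveOn.sum_le_card_mul {ι : Type*} {s : Set ℝ} {f : ℝ → ℝ} (hf : ConcaveOn ℝ s f)
    {t : Finset ι} {p : ι → ℝ} {m : ℝ} (hp : ∀ i ∈ t, p i ∈ s)
    (hm : ∑ i ∈ t, p i = #t * m) : ∑ i ∈ t, f (p i) ≤ #t * f m := by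
  rcases t.eq_empty_or_nonempty with rfl | ht
  · simp
  have hn : (0 : ℝ) < #t := by exact_mod_cast ht.card_pos
  have hJensen := hf.le_map_sum (t := t) (w := fun _ => (#t : ℝ)⁻¹) (p := p)
    (fun _ _ => by positivity) (by simp [hn.ne']) hp
  simp only [smul_eq_mul, ← mul_sum, hm, inv_mul_cancel_left₀ hn.ne'] at hJensen
  calc ∑ i ∈ t, f (p i) = #t * ((#t : ℝ)⁻¹ * ∑ i ∈ t, f (p i)) := by field_simp
    _ ≤ #t * f m := by gcongr

lemma sum_offDiag_eq_sum_sum_erase {α M : Type*} [DecidableEq α] [AddCommMonoid M]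
    (s : Finset α) (f : α → α → M) :
    ∑ p ∈ s.offDiag, f p.1 p.2 = ∑ a ∈ s, ∑ b ∈ s.erase a, f a b :=
  sum_finset_product _ _ _ fun p => by simp only [mem_offDiag, mem_erase]; tauto

lemma sum_offDiag_add_le {α : Type*} [DecidableEq α] {s : Finset α} {g : α → ℝ}
    (hg : ∀ a ∈ s, 0 ≤ g a) : ∑ p ∈ s.offDiag, (g p.1 + g p.2) ≤ 2 * #s * ∑ a ∈ s, g a := by
  calc ∑ p ∈ s.offDiag, (g p.1 + g p.2) ≤ ∑ p ∈ s ×ˢ s, (g p.1 + g p.2) :=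
        sum_le_sum_of_subset_of_nonneg
          (fun p hp => mem_product.2 ⟨(mem_offDiag.1 hp).1, (mem_offDiag.1 hp).2.1⟩)
          fun p hp _ => add_nonneg (hg _ (mem_product.1 hp).1) (hg _ (mem_product.1 hp).2)
    _ = 2 * #s * ∑ a ∈ s, g a := by
        simp only [sum_product, sum_add_distrib, sum_const, nsmul_eq_mul, ← mul_sum]; ring

lemma powersetCard_two_eq_image_offDiag {α : Type*} [DecidableEq α] (s : Finset α) :
    s.powersetCard 2 = s.offDiag.image fun p => {p.1, p.2} := by
  ext A
  simp only [mem_powersetCard, card_eq_two, mem_image, mem_offDiag, Prod.exists]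
  constructor
  · rintro ⟨hA, x, y, hxy, rfl⟩
    exact ⟨x, y, ⟨hA (by simp), hA (by simp), hxy⟩, rfl⟩
  · rintro ⟨x, y, ⟨hx, hy, hxy⟩, rfl⟩
    exact ⟨by simp [insert_subset_iff, hx, hy], x, y, hxy, rfl⟩

lemma sum_powerset_filter_card_one_two {α M : Type*} [DecidableEq α] [AddCommMonoid M]
    (s : Finset α) (f : ℕ → Finset α → M) :
    ∑ A ∈ s.powerset with 1 ≤ #A ∧ #A ≤ 2, f #A A =
      ∑ a ∈ s, f 1 {a} + ∑ A ∈ s.powersetCard 2, f 2 A := by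
  have hsplit : s.powerset.filter (fun A => 1 ≤ #A ∧ #A ≤ 2) =
      s.powersetCard 1 ∪ s.powersetCard 2 := by
    ext A; simp only [mem_filter, mem_powerset, mem_union, mem_powersetCard]; grind
  have hdisj : Disjoint (s.powersetCard 1) (s.powersetCard 2) :=
    disjoint_left.2 fun A h₁ h₂ => by
      rw [mem_powersetCard] at h₁ h₂; omega
  rw [hsplit, sum_union hdisj, powersetCard_one, sum_map]
  congr 1
  exact sum_congr rfl fun A hA => by rw [(mem_powersetCard.1 hA).2]

lemma sum_inv_erase_eq_card_mul_rstarInv {L : ℕ} (r : Fin L → Fin L → ℝ) (ℓ₀ : Fin L) :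
    ∑ ℓ ∈ univ.erase ℓ₀, (r ℓ₀ ℓ)⁻¹ = #(univ.erase ℓ₀) * rstarInv r ℓ₀ := by
  have hcard : (#(univ.erase ℓ₀) : ℝ) = L - 1 := by
    rw [card_erase_of_mem (mem_univ _), card_univ, Fintype.card_fin, Nat.cast_sub ℓ₀.pos,
      Nat.cast_one]
  rcases eq_or_ne #(univ.erase ℓ₀) 0 with h | h
  · simp [card_eq_zero.1 h]
  · have hL : (L : ℝ) - 1 ≠ 0 := hcard ▸ Nat.cast_ne_zero.2 h
    rw [rstarInv, hcard]
    field_simp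

lemma sum_offDiag_inv_eq_card_mul_rssInv {L : ℕ} (r : Fin L → Fin L → ℝ) :
    ∑ p ∈ (univ : Finset (Fin L)).offDiag, (r p.1 p.2)⁻¹ =
      #(univ : Finset (Fin L)).offDiag * rssInv r := by
  rcases Nat.eq_zero_or_pos L with rfl | hL
  · simp
  have hcard : #(univ : Finset (Fin L)).offDiag = (L - 1) * L := by
    rw [offDiag_card, card_univ, Fintype.card_fin, Nat.sub_one_mul]
  have herase : ∀ ℓ : Fin L, #(univ.erase ℓ) = L - 1 := fun ℓ => by
    rw [card_erase_of_mem (mem_univ _), card_univ, Fintype.card_fin]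
  rw [sum_offDiag_eq_sum_sum_erase univ fun a b => (r a b)⁻¹]
  simp only [sum_inv_erase_eq_card_mul_rstarInv, herase, ← mul_sum, hcard, rssInv]
  have : (L : ℝ) ≠ 0 := by positivity
  push_cast
  field_simp

lemma rstarInv_nonneg {L : ℕ} {r : Fin L → Fin L → ℝ} (hr : ∀ ℓ₁ ℓ₂, ℓ₁ ≠ ℓ₂ → 0 < r ℓ₁ ℓ₂)
    (ℓ₀ : Fin L) : 0 ≤ rstarInv r ℓ₀ := by
  have hL : (1 : ℝ) ≤ L := by exact_mod_cast ℓ₀.pos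
  exact mul_nonneg (one_div_nonneg.2 (by linarith))
    (sum_nonneg fun _ hℓ => (inv_pos.2 (hr _ _ (ne_of_mem_erase hℓ).symm)).le)

lemma rssInv_nonneg {L : ℕ} {r : Fin L → Fin L → ℝ} (hr : ∀ ℓ₁ ℓ₂, ℓ₁ ≠ ℓ₂ → 0 < r ℓ₁ ℓ₂) :
    0 ≤ rssInv r :=
  mul_nonneg (by positivity) (sum_nonneg fun ℓ _ => rstarInv_nonneg hr ℓ)

section Jensen

variable {L : ℕ} {r : Fin L → Fin L → ℝ} {φ : ℝ → ℝ}

lemma ConcaveOn.sum_erase_le_card_mul_rstarInv (hφ : ConcaveOn ℝ (Set.Ici 0) φ)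
    (hr : ∀ ℓ₁ ℓ₂, ℓ₁ ≠ ℓ₂ → 0 < r ℓ₁ ℓ₂) (ℓ₀ : Fin L) :
    ∑ ℓ ∈ univ.erase ℓ₀, φ (r ℓ₀ ℓ)⁻¹ ≤ #(univ.erase ℓ₀) * φ (rstarInv r ℓ₀) :=
  hφ.sum_le_card_mul (fun _ hℓ => (inv_pos.2 (hr _ _ (ne_of_mem_erase hℓ).symm)).le)
    (sum_inv_erase_eq_card_mul_rstarInv r ℓ₀)

lemma ConcaveOn.sum_offDiag_le_card_mul_rssInv (hφ : ConcaveOn ℝ (Set.Ici 0) φ)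
    (hr : ∀ ℓ₁ ℓ₂, ℓ₁ ≠ ℓ₂ → 0 < r ℓ₁ ℓ₂) :
    ∑ p ∈ (univ : Finset (Fin L)).offDiag, φ (r p.1 p.2)⁻¹ ≤
      #(univ : Finset (Fin L)).offDiag * φ (rssInv r) :=
  hφ.sum_le_card_mul (fun _ hp => (inv_pos.2 (hr _ _ (mem_offDiag.1 hp).2.2)).le)
    (sum_offDiag_inv_eq_card_mul_rssInv r)

end Jensen

section SetRate

variable {α : Type*} {r : α → α → ℝ} {rS : Finset α → ℝ}

lemma rS_pos (hr : ∀ x y, x ≠ y → 0 < r x y)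
    (hrS : ∀ s : Finset α, 2 ≤ #s → ∃ x ∈ s, ∃ y ∈ s, x ≠ y ∧ rS s = r x y)
    {s : Finset α} (hs : 2 ≤ #s) : 0 < rS s := by
  obtain ⟨x, -, y, -, hxy, h⟩ := hrS s hs
  exact h ▸ hr x y hxy

lemma rS_pair_eq [DecidableEq α] (hsym : ∀ x y, r x y = r y x)
    (hrS : ∀ s : Finset α, 2 ≤ #s → ∃ x ∈ s, ∃ y ∈ s, x ≠ y ∧ rS s = r x y)
    {p q : α} (hpq : p ≠ q) : rS {p, q} = r p q := by
  obtain ⟨x, hx, y, hy, hxy, h⟩ := hrS {p, q} (card_pair hpq).ge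
  rw [h]
  simp only [mem_insert, mem_singleton] at hx hy
  rcases hx with rfl | rfl <;> rcases hy with rfl | rfl <;>
    first | exact absurd rfl hxy | rfl | exact hsym x y

lemma inv_rS_triple_le [DecidableEq α] (hr : ∀ x y, x ≠ y → 0 < r x y)
    (hsym : ∀ x y, r x y = r y x)
    (hrS : ∀ s : Finset α, 2 ≤ #s → ∃ x ∈ s, ∃ y ∈ s, x ≠ y ∧ rS s = r x y)
    {p q w : α} (hpq : p ≠ q) (hpw : p ≠ w) (hqw : q ≠ w) :
    (rS {p, q, w})⁻¹ ≤ (r p q)⁻¹ + (r p w)⁻¹ + (r q w)⁻¹ := by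
  have hcard : #{p, q, w} = 3 := card_eq_three.2 ⟨p, q, w, hpq, hpw, hqw, rfl⟩
  obtain ⟨x, hx, y, hy, hxy, h⟩ := hrS {p, q, w} (by omega)
  have h₁ := (inv_pos.2 (hr _ _ hpq)).le
  have h₂ := (inv_pos.2 (hr _ _ hpw)).le
  have h₃ := (inv_pos.2 (hr _ _ hqw)).le
  rw [h]
  simp only [mem_insert, mem_singleton] at hx hy
  rcases hx with rfl | rfl | rfl <;> rcases hy with rfl | rfl | rfl <;>
    first | exact absurd rfl hxy | linarith | (rw [hsym x y]; linarith)

lemma linSqrt_inv_rS_triple_le [DecidableEq α] {a b : ℝ} (ha : 0 ≤ a) (hb : 0 ≤ b)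
    (hr : ∀ x y, x ≠ y → 0 < r x y) (hsym : ∀ x y, r x y = r y x)
    (hrS : ∀ s : Finset α, 2 ≤ #s → ∃ x ∈ s, ∃ y ∈ s, x ≠ y ∧ rS s = r x y)
    {p q w : α} (hpq : p ≠ q) (hpw : p ≠ w) (hqw : q ≠ w) :
    linSqrt a b (rS {p, q, w})⁻¹ ≤
      linSqrt a b (r p q)⁻¹ + linSqrt a b (r p w)⁻¹ + linSqrt a b (r q w)⁻¹ := by
  have h₁ := (inv_pos.2 (hr _ _ hpq)).le
  have h₂ := (inv_pos.2 (hr _ _ hpw)).le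
  have h₃ := (inv_pos.2 (hr _ _ hqw)).le
  calc linSqrt a b (rS {p, q, w})⁻¹ ≤ linSqrt a b ((r p q)⁻¹ + (r p w)⁻¹ + (r q w)⁻¹) :=
        linSqrt_mono ha hb (inv_rS_triple_le hr hsym hrS hpq hpw hqw)
    _ ≤ _ := by grw [linSqrt_add_le hb (add_nonneg h₁ h₂) h₃, linSqrt_add_le hb h₁ h₂]

end SetRate

section SubsetSums

variable {L : ℕ} {r : Fin L → Fin L → ℝ} {rS : Finset (Fin L) → ℝ} {a b : ℝ}

lemma sum_linSqrt_pairs_le (ha : 0 ≤ a) (hb : 0 ≤ b) (hr : ∀ ℓ₁ ℓ₂, ℓ₁ ≠ ℓ₂ → 0 < r ℓ₁ ℓ₂)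
    (hsym : ∀ ℓ₁ ℓ₂, r ℓ₁ ℓ₂ = r ℓ₂ ℓ₁)
    (hrS : ∀ s : Finset (Fin L), 2 ≤ #s → ∃ x ∈ s, ∃ y ∈ s, x ≠ y ∧ rS s = r x y)
    (ℓ₀ : Fin L) :
    ∑ ℓ ∈ univ.erase ℓ₀, 1 / (L : ℝ) * linSqrt a b (rS {ℓ₀, ℓ})⁻¹ ≤
      linSqrt a b (rstarInv r ℓ₀) := by
  have hL : (0 : ℝ) < L := by exact_mod_cast ℓ₀.pos
  have hcard : (#(univ.erase ℓ₀) : ℝ) ≤ L := by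
    exact_mod_cast (card_le_univ _).trans_eq (Fintype.card_fin L)
  have hu := linSqrt_nonneg (b := b) ha (rstarInv_nonneg hr ℓ₀)
  rw [← mul_sum, sum_congr rfl fun ℓ hℓ => by rw [rS_pair_eq hsym hrS (ne_of_mem_erase hℓ).symm]]
  calc 1 / (L : ℝ) * ∑ ℓ ∈ univ.erase ℓ₀, linSqrt a b (r ℓ₀ ℓ)⁻¹
      ≤ 1 / L * (#(univ.erase ℓ₀) * linSqrt a b (rstarInv r ℓ₀)) := by
        gcongr
        exact (concaveOn_linSqrt hb).sum_erase_le_card_mul_rstarInv hr ℓ₀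
    _ ≤ 1 / L * (L * linSqrt a b (rstarInv r ℓ₀)) := by gcongr
    _ = linSqrt a b (rstarInv r ℓ₀) := by field_simp

lemma sum_linSqrt_triples_le (ha : 0 ≤ a) (hb : 0 ≤ b) (hr : ∀ ℓ₁ ℓ₂, ℓ₁ ≠ ℓ₂ → 0 < r ℓ₁ ℓ₂)
    (hsym : ∀ ℓ₁ ℓ₂, r ℓ₁ ℓ₂ = r ℓ₂ ℓ₁)
    (hrS : ∀ s : Finset (Fin L), 2 ≤ #s → ∃ x ∈ s, ∃ y ∈ s, x ≠ y ∧ rS s = r x y)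
    (ℓ₀ : Fin L) :
    ∑ A ∈ (univ.erase ℓ₀).powersetCard 2, 1 / (L : ℝ) ^ 2 * linSqrt a b (rS (insert ℓ₀ A))⁻¹ ≤
      2 * linSqrt a b (rstarInv r ℓ₀) + linSqrt a b (rssInv r) := by
  set s := univ.erase ℓ₀
  set φ := linSqrt a b
  have hL : (0 : ℝ) < L := by exact_mod_cast ℓ₀.pos
  have hcard : (#s : ℝ) ≤ L := by
    exact_mod_cast (card_le_univ _).trans_eq (Fintype.card_fin L)
  have hcard₂ : (#(univ : Finset (Fin L)).offDiag : ℝ) ≤ L ^ 2 := by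
    rw [offDiag_card, card_univ, Fintype.card_fin]; norm_cast; rw [sq]; omega
  have hinv : ∀ ℓ₁ ℓ₂, ℓ₁ ≠ ℓ₂ → 0 ≤ (r ℓ₁ ℓ₂)⁻¹ := fun _ _ h => (inv_pos.2 (hr _ _ h)).le
  have hφ : ∀ {t}, 0 ≤ t → 0 ≤ φ t := linSqrt_nonneg ha
  have hu := hφ (rstarInv_nonneg hr ℓ₀)
  have hv := hφ (rssInv_nonneg hr)
  have hstar : ∑ ℓ ∈ s, φ (r ℓ₀ ℓ)⁻¹ ≤ #s * φ (rstarInv r ℓ₀) :=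
    (concaveOn_linSqrt hb).sum_erase_le_card_mul_rstarInv hr ℓ₀
  have hss : ∑ p ∈ s.offDiag, φ (r p.1 p.2)⁻¹ ≤
      #(univ : Finset (Fin L)).offDiag * φ (rssInv r) :=
    (sum_le_sum_of_subset_of_nonneg (offDiag_mono (subset_univ s)) fun p hp _ =>
      hφ (hinv _ _ (mem_offDiag.1 hp).2.2)).trans
      ((concaveOn_linSqrt hb).sum_offDiag_le_card_mul_rssInv hr)
  calc ∑ A ∈ s.powersetCard 2, 1 / (L : ℝ) ^ 2 * φ (rS (insert ℓ₀ A))⁻¹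
      ≤ ∑ p ∈ s.offDiag, 1 / (L : ℝ) ^ 2 * φ (rS {ℓ₀, p.1, p.2})⁻¹ := by
        rw [powersetCard_two_eq_image_offDiag]
        refine sum_image_le_of_nonneg fun A hA => ?_
        obtain ⟨p, hp, rfl⟩ := mem_image.1 hA
        have hpair : #({p.1, p.2} : Finset (Fin L)) = 2 := card_pair (mem_offDiag.1 hp).2.2
        have h3 : 2 ≤ #(insert ℓ₀ {p.1, p.2}) := hpair ▸ card_le_card (subset_insert _ _)
        exact mul_nonneg (by positivity) (hφ (inv_nonneg.2 (rS_pos hr hrS h3).le))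
    _ ≤ ∑ p ∈ s.offDiag,
          1 / (L : ℝ) ^ 2 * (φ (r ℓ₀ p.1)⁻¹ + φ (r ℓ₀ p.2)⁻¹ + φ (r p.1 p.2)⁻¹) :=
        sum_le_sum fun p hp => by
          obtain ⟨h₁, h₂, h₁₂⟩ := mem_offDiag.1 hp
          gcongr
          exact linSqrt_inv_rS_triple_le ha hb hr hsym hrS (ne_of_mem_erase h₁).symm
            (ne_of_mem_erase h₂).symm h₁₂
    _ = 1 / (L : ℝ) ^ 2 * (∑ p ∈ s.offDiag, (φ (r ℓ₀ p.1)⁻¹ + φ (r ℓ₀ p.2)⁻¹)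
          + ∑ p ∈ s.offDiag, φ (r p.1 p.2)⁻¹) := by rw [← mul_sum, sum_add_distrib]
    _ ≤ 1 / (L : ℝ) ^ 2 * (2 * #s * (#s * φ (rstarInv r ℓ₀))
          + #(univ : Finset (Fin L)).offDiag * φ (rssInv r)) := by
        gcongr
        refine (sum_offDiag_add_le fun ℓ hℓ => hφ (hinv _ _ (ne_of_mem_erase hℓ).symm)).trans ?_
        gcongr
    _ ≤ 1 / (L : ℝ) ^ 2 * (2 * L * (L * φ (rstarInv r ℓ₀)) + L ^ 2 * φ (rssInv r)) := by
        gcongr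
    _ = 2 * φ (rstarInv r ℓ₀) + φ (rssInv r) := by field_simp

end SubsetSums

/-- Summation estimate for harmonic recombination rates: there is a constant
`C` independent of `L`, `ε`, `ρ`, `r` and `ℓ₀` such that, for `ρ ≥ e`,
`∑_{A⊆[L]∖{ℓ₀}, 1≤#A≤2} L^{-#A}(1/(ρ r_{{ℓ₀}∪A} ε) + L/(ρ r_{{ℓ₀}∪A})
  + √(ln ρ/(ρ r_{{ℓ₀}∪A})))
 ≤ C((1/(ρε) + L/ρ)(1/r*_{ℓ₀} + 1/r**) + √(ln ρ/(ρ r*_{ℓ₀})) + √(ln ρ/(ρ r**)))`,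
where `r_A` is the minimum pairwise rate over distinct pairs in `A`. -/
theorem harmonic_recombination_sum_estimate :
    ∃ C : ℝ, 0 < C ∧
      ∀ (L : ℕ), 2 ≤ L →
      ∀ r : Fin L → Fin L → ℝ,
        (∀ ℓ₁ ℓ₂, ℓ₁ ≠ ℓ₂ → 0 < r ℓ₁ ℓ₂) →
        (∀ ℓ₁ ℓ₂, r ℓ₁ ℓ₂ = r ℓ₂ ℓ₁) →
      ∀ rS : Finset (Fin L) → ℝ,
        (∀ s : Finset (Fin L), 2 ≤ s.card →
          ((∃ ℓ₁ ∈ s, ∃ ℓ₂ ∈ s, ℓ₁ ≠ ℓ₂ ∧ rS s = r ℓ₁ ℓ₂) ∧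
            ∀ ℓ₁ ∈ s, ∀ ℓ₂ ∈ s, ℓ₁ ≠ ℓ₂ → rS s ≤ r ℓ₁ ℓ₂)) →
      ∀ ρ ε : ℝ, Real.exp 1 ≤ ρ → 0 < ε →
      ∀ ℓ₀ : Fin L,
        (∑ A ∈ (univ.erase ℓ₀).powerset.filter
              (fun A => 1 ≤ A.card ∧ A.card ≤ 2),
            (1 / (L : ℝ) ^ A.card) *
              (1 / (ρ * rS (insert ℓ₀ A) * ε)
                + (L : ℝ) / (ρ * rS (insert ℓ₀ A))
                + Real.sqrt (Real.log ρ / (ρ * rS (insert ℓ₀ A)))))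
          ≤ C * ((1 / (ρ * ε) + (L : ℝ) / ρ) * (rstarInv r ℓ₀ + rssInv r)
              + Real.sqrt (Real.log ρ * rstarInv r ℓ₀ / ρ)
              + Real.sqrt (Real.log ρ * rssInv r / ρ)) := by
  refine ⟨3, by norm_num, fun L _ r hr hsym rS hrS ρ ε hρ hε ℓ₀ => ?_⟩
  have hρ₀ : 0 < ρ := (Real.exp_pos 1).trans_le hρ
  have ha : 0 ≤ 1 / (ρ * ε) + (L : ℝ) / ρ := by positivity
  have hb : 0 ≤ Real.log ρ / ρ :=
    div_nonneg (Real.log_nonneg (by linarith [Real.add_one_le_exp 1])) hρ₀.le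
  have hrS' : ∀ s : Finset (Fin L), 2 ≤ #s → ∃ x ∈ s, ∃ y ∈ s, x ≠ y ∧ rS s = r x y :=
    fun s hs => (hrS s hs).1
  have hterm : ∀ R : ℝ, 1 / (ρ * R * ε) + L / (ρ * R) + √(Real.log ρ / (ρ * R)) =
      linSqrt (1 / (ρ * ε) + L / ρ) (Real.log ρ / ρ) R⁻¹ := fun R => by
    rw [linSqrt]; congr 1 <;> [ring; ring_nf]
  have hrhs : (1 / (ρ * ε) + (L : ℝ) / ρ) * (rstarInv r ℓ₀ + rssInv r)
      + √(Real.log ρ * rstarInv r ℓ₀ / ρ) + √(Real.log ρ * rssInv r / ρ) =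
      linSqrt (1 / (ρ * ε) + L / ρ) (Real.log ρ / ρ) (rstarInv r ℓ₀)
        + linSqrt (1 / (ρ * ε) + L / ρ) (Real.log ρ / ρ) (rssInv r) := by
    simp only [linSqrt, mul_div_right_comm]; ring
  simp only [hterm, hrhs]
  refine (sum_powerset_filter_card_one_two _ fun n A => 1 / (L : ℝ) ^ n *
    linSqrt (1 / (ρ * ε) + L / ρ) (Real.log ρ / ρ) (rS (insert ℓ₀ A))⁻¹).trans_le ?_
  have h₁ := sum_linSqrt_pairs_le ha hb hr hsym hrS' ℓ₀
  have h₂ := sum_linSqrt_triples_le ha hb hr hsym hrS' ℓ₀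
  have hv := linSqrt_nonneg (b := Real.log ρ / ρ) ha (rssInv_nonneg hr)
  simp only [pow_one]
  linarith
end
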